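/- arXiv:1505.07891 — 4 statements merged into one kernel-verified Lean document; each statement's English description precedes it below -/
import Mathlib

section
/- The formal derivative of F(z) = ∑_{m=0}^{p-1} C(c,m)(g(z)-1)^m satisfies F'(z) = V(z) - ∑_{j=1}^n (c·x_j/(1 - x_j z))·F(z), where V(z) = ∑_j (x_j/(1 - x_j z))·c·C(c-1, p-1)·(g(z)-1)^{p-1}; moreover the coefficient of z^l in V(z) is zero for 0 ≤ l ≤ p-1. -/
/-!
Put `u = g - 1` and `S = ∑ⱼ xⱼ/(1 - xⱼz)`. Logarithmic differentiation of `g` gives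
`u' = -S (1 + u)`. For the truncated binomial series `T_c^N = ∑_{m<N} C(c,m) uᵐ` the identities
`(m+1) C(c,m+1) = c C(c-1,m)` and Pascal's rule give `(T_c^p)' = c T_{c-1}^{p-1} u'` and
`T_c^p = (1 + u) T_{c-1}^{p-1} + C(c-1,p-1) u^{p-1}`, which combine to the differential
equation; both identities only need `m + 1` invertible for `m + 1 < p`.
Since `∑ⱼ xⱼ = 0` in `A`, `X ∣ S` and `X² ∣ u`, so `X^{2p-1}` divides `V`.
-/

open PowerSeries Finset
open scoped Nat

section GenBinomial

variable {k : Type*} [Field k]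

-- In characteristic `p` and for `r ≥ p` this is `0`, as `(r ! : k)⁻¹ = 0`.
def genBinomial (a : k) (r : ℕ) : k := (r ! : k)⁻¹ * ∏ i ∈ range r, (a - i)

@[simp]
theorem genBinomial_zero (a : k) : genBinomial a 0 = 1 := by
  simp [genBinomial]

theorem prod_range_succ_sub_cast (a : k) (m : ℕ) :
    ∏ i ∈ range (m + 1), (a - i) = a * ∏ i ∈ range m, (a - 1 - i) := by
  rw [prod_range_succ']
  push_cast
  rw [sub_zero, mul_comm]
  exact congrArg _ (prod_congr rfl fun i _ => by ring)

theorem succ_mul_genBinomial_succ {m : ℕ} (hm : ((m + 1 : ℕ) : k) ≠ 0) (a : k) :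
    ((m + 1 : ℕ) : k) * genBinomial a (m + 1) = a * genBinomial (a - 1) m := by
  rw [genBinomial, genBinomial, prod_range_succ_sub_cast, Nat.factorial_succ, Nat.cast_mul,
    mul_inv, mul_assoc _⁻¹, mul_inv_cancel_left₀ hm]
  ring

theorem genBinomial_succ {m : ℕ} (hm : ((m + 1 : ℕ) : k) ≠ 0) (a : k) :
    genBinomial a (m + 1) = genBinomial (a - 1) m + genBinomial (a - 1) (m + 1) := by
  have hm' : (m : k) + 1 ≠ 0 := by exact_mod_cast hm
  simp only [genBinomial]
  rw [prod_range_succ_sub_cast, Nat.factorial_succ, prod_range_succ]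
  push_cast
  field_simp
  ring

end GenBinomial

section TruncBinomial

variable {k : Type*} (A : Type*) {B : Type*} [Field k] [CommRing A] [Algebra k A] [CommRing B]
  [Algebra A B]

def truncBinomial (c : k) (N : ℕ) (u : B) : B :=
  ∑ m ∈ range N, algebraMap k A (genBinomial c m) • u ^ m

variable {A}

theorem truncBinomial_succ {N : ℕ} (hN : ∀ m < N, ((m + 1 : ℕ) : k) ≠ 0) (c : k) (u : B) :
    truncBinomial A c (N + 1) u =
      (1 + u) * truncBinomial A (c - 1) N u +
        algebraMap k A (genBinomial (c - 1) N) • u ^ N := by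
  induction N with
  | zero => simp [truncBinomial]
  | succ N ih =>
    rw [truncBinomial, sum_range_succ, ← truncBinomial, ih fun m hm => hN m (by omega),
      truncBinomial, truncBinomial, sum_range_succ, genBinomial_succ (hN N (by omega)), map_add,
      add_smul]
    simp only [Algebra.smul_def]
    ring

theorem derivation_truncBinomial_succ {N : ℕ} (hN : ∀ m < N, ((m + 1 : ℕ) : k) ≠ 0)
    (D : Derivation A B B) (c : k) (u : B) :
    D (truncBinomial A c (N + 1) u) =
      algebraMap k A c • truncBinomial A (c - 1) N u * D u := by
  rw [truncBinomial, truncBinomial, map_sum, sum_range_succ', pow_zero, D.map_smul,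
    D.map_one_eq_zero, smul_zero, add_zero, smul_mul_assoc, sum_mul, smul_sum]
  refine sum_congr rfl fun m hm => ?_
  have h := congrArg (fun r => algebraMap A B (algebraMap k A r))
    (succ_mul_genBinomial_succ (hN m (mem_range.mp hm)) c)
  push_cast [map_mul] at h
  rw [D.map_smul, D.leibniz_pow, Nat.add_sub_cancel, smul_eq_mul, nsmul_eq_mul]
  simp only [Algebra.smul_def]
  push_cast
  linear_combination (u ^ m * D u) * h

theorem derivation_truncBinomial_succ_of_eq {N : ℕ} (hN : ∀ m < N, ((m + 1 : ℕ) : k) ≠ 0)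
    (D : Derivation A B B) (c : k) {u s : B} (hu : D u = -(s * (1 + u))) :
    D (truncBinomial A c (N + 1) u) =
      algebraMap k A (c * genBinomial (c - 1) N) • (s * u ^ N) -
        (algebraMap k A c • s) * truncBinomial A c (N + 1) u := by
  rw [derivation_truncBinomial_succ hN, hu, truncBinomial_succ hN, map_mul, mul_smul]
  simp only [Algebra.smul_def]
  ring

end TruncBinomial

section PowerSeries

variable {R : Type*} [CommRing R]

theorem one_sub_C_mul_X_mul_mk_pow (a : R) :
    (1 - C a * X) * (PowerSeries.mk fun l => a ^ l) = 1 := by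
  have h := congrArg (rescale a) (mk_one_mul_one_sub_eq_one R)
  simpa [rescale_X, rescale_mk, mul_comm] using h

theorem derivative_prod_one_sub_C_mul_X {ι : Type*} (s : Finset ι) (x : ι → R) :
    derivative R (∏ j ∈ s, (1 - C (x j) * X)) =
      -((∑ j ∈ s, C (x j) * PowerSeries.mk fun i => x j ^ i) *
        ∏ j ∈ s, (1 - C (x j) * X)) := by
  classical
  induction s using Finset.induction_on with
  | empty => simp
  | insert a s ha ih =>
    have hinv := one_sub_C_mul_X_mul_mk_pow (x a)
    have hd : derivative R (1 - C (x a) * X) = -C (x a) := by simp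
    rw [prod_insert ha, sum_insert ha, Derivation.leibniz, ih, hd, smul_eq_mul, smul_eq_mul]
    linear_combination (C (x a) * ∏ j ∈ s, (1 - C (x j) * X)) * hinv

theorem X_sq_dvd_prod_one_sub_C_mul_X_sub {ι : Type*} (s : Finset ι) (x : ι → R) :
    (X : R⟦X⟧) ^ 2 ∣ ∏ j ∈ s, (1 - C (x j) * X) - (1 - C (∑ j ∈ s, x j) * X) := by
  classical
  induction s using Finset.induction_on with
  | empty => simp
  | insert a s ha ih =>
    obtain ⟨q, hq⟩ := ih
    refine ⟨(1 - C (x a) * X) * q + C (x a * ∑ j ∈ s, x j), ?_⟩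
    rw [prod_insert ha, sum_insert ha, map_add, map_mul]
    linear_combination (1 - C (x a) * X) * hq

theorem coeff_mul_pow_prod_one_sub_C_mul_X_sub_one {ι : Type*} [Fintype ι] {x : ι → R}
    (hx : ∑ j, x j = 0) {N l : ℕ} (hl : l ≤ N) :
    coeff l ((∑ j, C (x j) * PowerSeries.mk fun i => x j ^ i) *
      (∏ j, (1 - C (x j) * X) - 1) ^ N) = 0 := by
  have hS : X ∣ ∑ j, C (x j) * PowerSeries.mk fun i => x j ^ i := by
    simp [X_dvd_iff, hx]
  have hu : (X : R⟦X⟧) ^ 2 ∣ ∏ j, (1 - C (x j) * X) - 1 := by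
    simpa [hx] using X_sq_dvd_prod_one_sub_C_mul_X_sub univ x
  have h := mul_dvd_mul hS (pow_dvd_pow_of_dvd hu N)
  rw [← pow_mul, ← pow_succ'] at h
  exact X_pow_dvd_iff.mp h l (by omega)

end PowerSeries

theorem stmt11_general (p n : ℕ) (hp : p.Prime) (k : Type*) [Field k] [CharP k p]
    (c : k) :
    let A := MvPolynomial (Fin n) k ⧸
      Ideal.span {(∑ i, MvPolynomial.X i : MvPolynomial (Fin n) k)}
    let x : Fin n → A := fun i => Ideal.Quotient.mk _ (MvPolynomial.X i)
    let geom : A → PowerSeries A := fun a => PowerSeries.mk fun l => a ^ l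
    let g : PowerSeries A := ∏ j, (1 - PowerSeries.C (x j) * PowerSeries.X)
    let Cb : k → ℕ → k := fun a r =>
      ((r.factorial : k)⁻¹) * ∏ i ∈ Finset.range r, (a - (i : k))
    let F : PowerSeries A :=
      ∑ m ∈ Finset.range p, algebraMap k A (Cb c m) • (g - 1) ^ m
    let V : PowerSeries A :=
      algebraMap k A (c * Cb (c - 1) (p - 1)) •
        ((∑ j, PowerSeries.C (x j) * geom (x j)) * (g - 1) ^ (p - 1))
    PowerSeries.derivative A F =
        V - (algebraMap k A c • (∑ j, PowerSeries.C (x j) * geom (x j))) * F ∧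
      ∀ l : ℕ, l ≤ p - 1 → PowerSeries.coeff l V = 0 := by
  intro A x geom g Cb F V
  have hx : ∑ j, x j = 0 := by
    rw [← map_sum, Ideal.Quotient.eq_zero_iff_mem]
    exact Ideal.mem_span_singleton_self _
  refine ⟨?_, fun l hl => ?_⟩
  · obtain ⟨N, rfl⟩ := Nat.exists_eq_add_one.mpr hp.pos
    have hN : ∀ m < N, ((m + 1 : ℕ) : k) ≠ 0 := fun m hm h =>
      absurd (Nat.le_of_dvd m.succ_pos ((CharP.cast_eq_zero_iff k (N + 1) _).mp h)) (by omega)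
    have hg : derivative A (g - 1) = -((∑ j, C (x j) * geom (x j)) * (1 + (g - 1))) := by
      rw [map_sub, Derivation.map_one_eq_zero, sub_zero, add_sub_cancel]
      exact derivative_prod_one_sub_C_mul_X univ x
    exact derivation_truncBinomial_succ_of_eq hN (derivative A) c hg
  · rw [LinearMap.map_smul_of_tower]
    exact smul_eq_zero_of_right _ (coeff_mul_pow_prod_one_sub_C_mul_X_sub_one hx hl)

/-- With `F(z) = ∑_{m=0}^{p-1} C(c,m)(g(z)-1)^m` over
`A = k[x_1,…,x_n]/(x_1+⋯+x_n)`, the formal derivative satisfies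
`F'(z) = V(z) - ∑_j (c x_j/(1-x_j z)) F(z)` where
`V(z) = (∑_j x_j/(1-x_j z)) · c · C(c-1,p-1) · (g(z)-1)^{p-1}`, and the
coefficient of `z^l` in `V(z)` vanishes for `0 ≤ l ≤ p-1`. -/
theorem stmt11 (p n : ℕ) (hp : p.Prime) (k : Type*) [Field k] [CharP k p]
    (hn : 0 < n) (hpn : p ∣ n) (c : k) :
    let A := MvPolynomial (Fin n) k ⧸
      Ideal.span {(∑ i, MvPolynomial.X i : MvPolynomial (Fin n) k)}
    let x : Fin n → A := fun i => Ideal.Quotient.mk _ (MvPolynomial.X i)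
    let geom : A → PowerSeries A := fun a => PowerSeries.mk fun l => a ^ l
    let g : PowerSeries A := ∏ j, (1 - PowerSeries.C (x j) * PowerSeries.X)
    let Cb : k → ℕ → k := fun a r =>
      ((r.factorial : k)⁻¹) * ∏ i ∈ Finset.range r, (a - (i : k))
    let F : PowerSeries A :=
      ∑ m ∈ Finset.range p, algebraMap k A (Cb c m) • (g - 1) ^ m
    let V : PowerSeries A :=
      algebraMap k A (c * Cb (c - 1) (p - 1)) •
        ((∑ j, PowerSeries.C (x j) * geom (x j)) * (g - 1) ^ (p - 1))
    PowerSeries.derivative A F =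
        V - (algebraMap k A c • (∑ j, PowerSeries.C (x j) * geom (x j))) * F ∧
      ∀ l : ℕ, l ≤ p - 1 → PowerSeries.coeff l V = 0 :=
  stmt11_general p n hp k c
end

section
/- With F(z) = ∑_{m=0}^{p-1} C(c,m)(g(z)-1)^m, one has ∂_{y_2-y_1}(F(z)) = G(z) - (zc/(1 - x_2 z) - zc/(1 - x_1 z))·F(z), where G(z) = (zc/(1 - x_2 z) - zc/(1 - x_1 z))·C(c-1, p-1)·(g(z)-1)^{p-1}; moreover the coefficient of z^l in G(z) is zero for 0 ≤ l ≤ p. -/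
/-!
The derivation `∂` acts coefficientwise and each factor `1 - x_j z` is inverted by a geometric
series, so the logarithmic derivative of `g` is `z/(1 - x_1 z) - z/(1 - x_2 z) =: -u`; thus
`w = g - 1` satisfies `∂w = -u (1 + w)`. Now `F` is the truncation below degree `p` of `(1 + w)^c`,
and the recurrence `(m + 1) C(c, m + 1) = (c - m) C(c, m)`, valid while `(m + 1)!` is invertible in
`k`, i.e. for `m + 1 < p`, gives `(1 + w) dF/dw = c F - c C(c - 1, p - 1) w^(p-1)`. The chain rule
then yields the identity with `h = c u`. For the vanishing, `z^2` divides `h` and `z^(p-1)` divides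
`(g - 1)^(p-1)`, so the coefficients of `G` below `z^(p+1)` vanish already in `k[x]`.
-/

open PowerSeries Finset
open scoped Nat

namespace PowerSeries

variable {R : Type*} [CommRing R]

theorem mk_pow_mul_one_sub_C_mul_X (a : R) : (mk fun n => a ^ n) * (1 - C a * X) = 1 := by
  simpa [rescale_mk, rescale_X] using congrArg (rescale a) (mk_one_mul_one_sub_eq_one R)

theorem X_sq_dvd_X_mul_mk_pow_sub (a b : R) :
    X ^ 2 ∣ X * (mk fun n => a ^ n) - X * mk fun n => b ^ n := by
  rw [pow_two, ← mul_sub]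
  exact mul_dvd_mul_left X (X_dvd_iff.mpr (by simp))

end PowerSeries

namespace Derivation

variable {k A : Type*} [CommRing k] [CommRing A] [Algebra k A]

theorem map_prod_eq_prod_mul_sum (D : Derivation k A A) {ι : Type*} [DecidableEq ι]
    {f e : ι → A} (s : Finset ι) (he : ∀ i ∈ s, e i * f i = 1) :
    D (∏ i ∈ s, f i) = (∏ i ∈ s, f i) * ∑ i ∈ s, e i * D (f i) := by
  induction s using Finset.induction_on with
  | empty => simp
  | insert a s ha ih =>
    rw [prod_insert ha, sum_insert ha, D.leibniz, ih fun i hi => he i (mem_insert_of_mem hi),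
      smul_eq_mul, smul_eq_mul]
    linear_combination (-((∏ i ∈ s, f i) * D (f a))) * he a (mem_insert_self a s)

variable {R : Type*} [CommRing R] [Algebra k R]

noncomputable def powerSeriesMapCoeffs (d : Derivation k R R) : Derivation k R⟦X⟧ R⟦X⟧ where
  toFun f := PowerSeries.mk fun l => d (coeff l f)
  map_add' f g := by ext; simp
  map_smul' a f := by ext; simp
  map_one_eq_zero' := by ext; simp [coeff_one, apply_ite d]
  leibniz' f g := by
    ext l
    simp only [LinearMap.coe_mk, AddHom.coe_mk, coeff_mk, smul_eq_mul, map_add, mul_comm g,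
      coeff_mul, map_sum, ← sum_add_distrib]
    exact sum_congr rfl fun x _ => by rw [d.leibniz, smul_eq_mul, smul_eq_mul, mul_comm (d _)]

variable (d : Derivation k R R)

@[simp]
theorem coeff_powerSeriesMapCoeffs (f : R⟦X⟧) (l : ℕ) :
    coeff l (d.powerSeriesMapCoeffs f) = d (coeff l f) :=
  PowerSeries.coeff_mk (f := fun l => d (coeff l f)) l

theorem powerSeriesMapCoeffs_C (r : R) : d.powerSeriesMapCoeffs (C r) = C (d r) := by
  ext l
  simp [coeff_C, apply_ite d]

@[simp]
theorem powerSeriesMapCoeffs_X : d.powerSeriesMapCoeffs X = 0 := by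
  ext l
  simp [coeff_X, apply_ite d]

theorem powerSeriesMapCoeffs_one_sub_C_mul_X (r : R) :
    d.powerSeriesMapCoeffs (1 - C r * X) = -(C (d r) * X) := by
  simp [leibniz, powerSeriesMapCoeffs_C, mul_comm X]

theorem powerSeriesMapCoeffs_prod_one_sub_C_mul_X {ι : Type*} [DecidableEq ι] (s : Finset ι)
    (a : ι → R) :
    d.powerSeriesMapCoeffs (∏ j ∈ s, (1 - C (a j) * X))
      = -((∑ j ∈ s, d (a j) • (X * PowerSeries.mk fun m => a j ^ m))
          * ∏ j ∈ s, (1 - C (a j) * X)) := by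
  rw [d.powerSeriesMapCoeffs.map_prod_eq_prod_mul_sum s fun j _ =>
    mk_pow_mul_one_sub_C_mul_X (a j), mul_comm, ← neg_mul, ← sum_neg_distrib]
  congr 1
  refine sum_congr rfl fun j _ => ?_
  rw [powerSeriesMapCoeffs_one_sub_C_mul_X, smul_eq_C_mul]
  ring

end Derivation

theorem MvPolynomial.sum_pderiv_sub_pderiv_X_smul {k σ A : Type*} [CommRing k] [Fintype σ]
    [DecidableEq σ] [AddCommGroup A] [Module (MvPolynomial σ k) A] (i₁ i₂ : σ) (f : σ → A) :
    ∑ j, (pderiv i₂ - pderiv i₁ : Derivation k (MvPolynomial σ k) (MvPolynomial σ k)) (X j) • f j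
      = f i₂ - f i₁ := by
  simp [pderiv_X, sub_smul, sum_sub_distrib, Pi.single_apply]

section Binomial

variable {k : Type*} [Field k]

-- In characteristic `p`, `(r ! : k)⁻¹ = 0` for `r ≥ p`: hence the factorial hypotheses below.
def binom (a : k) (r : ℕ) : k := (r ! : k)⁻¹ * ∏ i ∈ range r, (a - i)

theorem sub_mul_binom (a : k) (r : ℕ) : (a - r) * binom a r = a * binom (a - 1) r := by
  have : (a - r) * ∏ i ∈ range r, (a - i) = a * ∏ i ∈ range r, (a - 1 - i) := by
    rw [mul_comm, ← prod_range_succ, prod_range_succ']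
    push_cast
    simp only [sub_zero, sub_add_eq_sub_sub, sub_right_comm a 1]
    ring
  simp only [binom]
  linear_combination (r ! : k)⁻¹ * this

theorem natCast_succ_mul_binom_succ (a : k) {r : ℕ} (hr : ((r + 1)! : k) ≠ 0) :
    ((r + 1 : ℕ) : k) * binom a (r + 1) = (a - r) * binom a r := by
  rw [Nat.factorial_succ, Nat.cast_mul] at hr
  simp only [binom, Nat.factorial_succ, Nat.cast_mul, prod_range_succ]
  have h₁ : ((r + 1 : ℕ) : k) ≠ 0 := left_ne_zero_of_mul hr
  field_simp

variable {S : Type*} [CommRing S] [Algebra k S]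

theorem one_add_mul_sum_nsmul_binom_smul_pow (c : k) (w : S) {q : ℕ} (hq : (q ! : k) ≠ 0) :
    (1 + w) * ∑ m ∈ range (q + 1), m • binom c m • w ^ (m - 1)
      = c • ∑ m ∈ range (q + 1), binom c m • w ^ m - ((c - q) * binom c q) • w ^ q := by
  induction q with
  | zero => simp [binom]
  | succ q ih =>
    have hq' : (q ! : k) ≠ 0 := by
      rw [Nat.factorial_succ, Nat.cast_mul] at hq
      exact right_ne_zero_of_mul hq
    have hstep := natCast_succ_mul_binom_succ c hq
    rw [sum_range_succ, mul_add, ih hq', sum_range_succ _ (q + 1)]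
    have hstep' := congrArg (algebraMap k S) hstep
    simp only [nsmul_eq_mul, Nat.add_sub_cancel]
    simp only [Algebra.smul_def, map_mul, map_sub, map_natCast] at hstep' ⊢
    push_cast at hstep' ⊢
    linear_combination w ^ q * hstep'

theorem Derivation.map_sum_binom_smul_pow (Δ : Derivation k S S) (c : k) {w u : S}
    (hw : Δ w = -(u * (1 + w))) {p : ℕ} (hp : 0 < p) (hfact : ((p - 1)! : k) ≠ 0) :
    Δ (∑ m ∈ range p, binom c m • w ^ m)
      = (c • u) * (binom (c - 1) (p - 1) • w ^ (p - 1))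
        - (c • u) * ∑ m ∈ range p, binom c m • w ^ m := by
  obtain ⟨q, rfl⟩ : ∃ q, p = q + 1 := ⟨p - 1, by omega⟩
  rw [Nat.add_sub_cancel] at hfact ⊢
  calc Δ (∑ m ∈ range (q + 1), binom c m • w ^ m)
      = -(u * ((1 + w) * ∑ m ∈ range (q + 1), m • binom c m • w ^ (m - 1))) := by
        simp only [map_sum, map_smul, leibniz_pow, hw, mul_sum, ← sum_neg_distrib]
        refine sum_congr rfl fun m _ => ?_
        simp only [nsmul_eq_mul, smul_eq_mul]
        simp only [Algebra.smul_def]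
        ring
    _ = _ := by
        rw [one_add_mul_sum_nsmul_binom_smul_pow c w hfact, sub_mul_binom]
        simp only [Algebra.smul_def, map_mul]
        ring

end Binomial

/-- With `F(z) = ∑_{m=0}^{p-1} C(c,m)(g(z)-1)^m` and the
derivation `∂ = ∂_{y_2-y_1}` (with `∂x_2 = 1`, `∂x_1 = -1`, `∂x_j = 0`
otherwise) extended coefficient-wise to power series, one has
`∂F(z) = G(z) - (zc/(1-x_2 z) - zc/(1-x_1 z))·F(z)` where
`G(z) = (zc/(1-x_2 z) - zc/(1-x_1 z))·C(c-1,p-1)·(g(z)-1)^{p-1}`; moreover the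
coefficient of `z^l` in `G(z)` is zero in `A = k[x_1,…,x_n]/(x_1+⋯+x_n)` for
`0 ≤ l ≤ p`. -/
theorem stmt13 (p n : ℕ) (hp : p.Prime) (k : Type*) [Field k] [CharP k p]
    (hn : 2 ≤ n) (c : k) :
    let R := MvPolynomial (Fin n) k
    let I : Ideal R := Ideal.span {(∑ i, MvPolynomial.X i : R)}
    let x : Fin n → R := MvPolynomial.X
    let i₁ : Fin n := ⟨0, by omega⟩
    let i₂ : Fin n := ⟨1, by omega⟩
    let D : PowerSeries R → PowerSeries R := fun f => PowerSeries.mk fun l =>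
      MvPolynomial.pderiv i₂ (PowerSeries.coeff (R := R) l f)
        - MvPolynomial.pderiv i₁ (PowerSeries.coeff (R := R) l f)
    let geom : R → PowerSeries R := fun a => PowerSeries.mk fun l => a ^ l
    let g : PowerSeries R := ∏ j, (1 - PowerSeries.C (R := R) (x j) * PowerSeries.X)
    let Cb : k → ℕ → k := fun a r =>
      ((r.factorial : k)⁻¹) * ∏ i ∈ Finset.range r, (a - (i : k))
    let F : PowerSeries R :=
      ∑ m ∈ Finset.range p, (MvPolynomial.C (Cb c m) : R) • (g - 1) ^ m
    let h : PowerSeries R :=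
      PowerSeries.X * PowerSeries.C (R := R) (MvPolynomial.C c) * geom (x i₂)
        - PowerSeries.X * PowerSeries.C (R := R) (MvPolynomial.C c) * geom (x i₁)
    let G : PowerSeries R :=
      h * ((MvPolynomial.C (Cb (c - 1) (p - 1)) : R) • (g - 1) ^ (p - 1))
    D F = G - h * F ∧
      ∀ l : ℕ, l ≤ p → Ideal.Quotient.mk I (PowerSeries.coeff (R := R) l G) = 0 := by
  intro R I x i₁ i₂ D geom g Cb F h G
  set d : Derivation k R R := MvPolynomial.pderiv i₂ - MvPolynomial.pderiv i₁
  set u : R⟦X⟧ := X * geom (x i₂) - X * geom (x i₁)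
  have hF : F = ∑ m ∈ range p, binom c m • (g - 1) ^ m :=
    sum_congr rfl fun m _ => algebraMap_smul R (binom c m) _
  have hh : h = c • u := by
    rw [Algebra.smul_def, PowerSeries.algebraMap_apply]
    change _ = C (MvPolynomial.C c) * u
    ring
  have hG : G = c • u * (binom (c - 1) (p - 1) • (g - 1) ^ (p - 1)) := by
    rw [← hh]
    exact congrArg (h * ·) (algebraMap_smul R _ _)
  have hg : d.powerSeriesMapCoeffs (g - 1) = -(u * (1 + (g - 1))) := by
    rw [map_sub, d.powerSeriesMapCoeffs.map_one_eq_zero, sub_zero, add_sub_cancel,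
      d.powerSeriesMapCoeffs_prod_one_sub_C_mul_X, MvPolynomial.sum_pderiv_sub_pderiv_X_smul]
  have hp₀ := hp.pos
  have hfact : ((p - 1)! : k) ≠ 0 := by
    rw [Ne, CharP.cast_eq_zero_iff k p, hp.dvd_factorial]
    omega
  refine ⟨?_, fun l hl => ?_⟩
  · rw [hF, hG, hh]
    exact d.powerSeriesMapCoeffs.map_sum_binom_smul_pow c hg hp₀ hfact
  · have hw : X ∣ g - 1 := X_dvd_iff.mpr (by simp [g, map_prod])
    have hXG : X ^ (p + 1) ∣ G := by
      rw [hG, show p + 1 = 2 + (p - 1) by omega, pow_add]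
      exact mul_dvd_mul (dvd_smul_of_dvd _ (X_sq_dvd_X_mul_mk_pow_sub _ _))
        (dvd_smul_of_dvd _ (pow_dvd_pow_of_dvd hw _))
    rw [X_pow_dvd_iff.mp hXG l (by omega), map_zero]
end

section
/- Under the substitution x_n = -1, x_j = 1, and x_i = 0 for i ≠ j, n (with 1 ≤ j ≤ n-1), the polynomial g(z) = ∏_{i=1}^n (1 - x_i z) specializes to 1 - z^2, and for an odd prime p the coefficient of z^p in F(z)/(1 - x_j z) specializes to ∑_{m=0}^{(p-1)/2} (-1)^m C(c,m), while for i ≠ j, i < n, the coefficient of z^p in F(z)/(1 - x_i z) specializes to 0. -/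
/-!
Under the substitution the only surviving factors of `g` are `(1 - z)(1 + z) = 1 - z²`, so
`g - 1 ↦ -z²` and `F` specializes to the even series `∑_{m<p} (-1)^m C(c,m) z^{2m}`.
Multiplying by `1/(1 - z)` takes partial sums of coefficients, so the coefficient of `z^p` collects
the terms with `2m ≤ p`; multiplying by `1/(1 - 0·z) = 1` leaves the coefficient of the odd power
`z^p`, which vanishes.
-/

open Finset PowerSeries

namespace PowerSeries

variable {R S : Type*} [CommRing R] [CommRing S]

theorem map_mk_pow (φ : R →+* S) (a : R) :
    map φ (mk fun l => a ^ l) = mk fun l => φ a ^ l := by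
  ext l
  simp

theorem mk_zero_pow : (mk fun l => (0 : R) ^ l) = 1 := by
  ext l
  simp [coeff_one, zero_pow_eq]

theorem map_prod_one_sub_C_mul_X {ι : Type*} (φ : R →+* S) (s : Finset ι) (x : ι → R) :
    map φ (∏ i ∈ s, (1 - C (x i) * X)) = ∏ i ∈ s, (1 - C (φ (x i)) * X) := by
  simp only [map_prod, map_sub, map_one, map_mul, map_C, map_X]

theorem prod_one_sub_C_mul_X_eq_one_sub_X_sq {ι : Type*} [Fintype ι] (a : ι → R) {j l : ι}
    (hjl : j ≠ l) (hj : a j = 1) (hl : a l = -1) (h₀ : ∀ i, i ≠ j → i ≠ l → a i = 0) :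
    ∏ i, (1 - C (a i) * X) = 1 - X ^ 2 := by
  rw [Finset.prod_eq_mul j l hjl (fun i _ hi => by simp [h₀ i hi.1 hi.2])
    (absurd (mem_univ j)) (absurd (mem_univ l)), hj, hl]
  simp only [map_one, map_neg]
  ring

theorem map_sum_smul_sub_one_pow {φ : R →+* S} {g : R⟦X⟧} (hg : map φ g = 1 - X ^ 2)
    (r : ℕ → R) (N : ℕ) :
    map φ (∑ m ∈ range N, r m • (g - 1) ^ m)
      = ∑ m ∈ range N, C ((-1) ^ m * φ (r m)) * X ^ (2 * m) := by
  rw [map_sum]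
  refine Finset.sum_congr rfl fun m _ => ?_
  rw [smul_eq_C_mul, map_mul, map_C, map_pow, map_sub, hg, map_one, sub_sub_cancel_left,
    neg_pow, ← pow_mul, map_mul, map_pow, map_neg, map_one]
  ring

theorem coeff_sum_C_mul_X_pow_two_mul_of_odd (b : ℕ → R) (N : ℕ) {p : ℕ} (hp : Odd p) :
    coeff p (∑ m ∈ range N, C (b m) * X ^ (2 * m)) = 0 := by
  rw [map_sum]
  refine Finset.sum_eq_zero fun m _ => ?_
  rw [coeff_C_mul_X_pow, if_neg]
  rintro rfl
  exact Nat.not_odd_iff_even.mpr (even_two_mul m) hp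

theorem coeff_sum_C_mul_X_pow_two_mul_mul_mk_one (b : ℕ → R) {N p : ℕ} (hN : p / 2 < N) :
    coeff p ((∑ m ∈ range N, C (b m) * X ^ (2 * m)) * mk fun _ => 1)
      = ∑ m ∈ range (p / 2 + 1), b m := by
  have hterm : ∀ m, coeff p (C (b m) * X ^ (2 * m) * mk fun _ => 1)
      = if 2 * m ≤ p then b m else 0 := fun m => by
    rw [mul_right_comm, coeff_mul_X_pow']
    split_ifs <;> simp
  rw [Finset.sum_mul, map_sum, Finset.sum_congr rfl fun m _ => hterm m,
    ← Finset.sum_subset (range_subset_range.mpr hN) fun m _ hm => if_neg ?_]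
  · exact Finset.sum_congr rfl fun m hm => if_pos (by rw [mem_range] at hm; omega)
  · rw [mem_range] at hm
    omega

end PowerSeries

theorem stmt14_general (p n : ℕ) (hodd : Odd p)
    (k : Type*) [Field k] (c : k)
    (j : Fin n) (hj : (j : ℕ) < n - 1) :
    let R := MvPolynomial (Fin n) k
    let x : Fin n → R := MvPolynomial.X
    let φ : R →+* k := (MvPolynomial.aeval (R := k) (fun i : Fin n =>
      if (i : ℕ) = n - 1 then (-1 : k) else if i = j then 1 else 0)).toRingHom
    let geom : R → PowerSeries R := fun a => PowerSeries.mk fun l => a ^ l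
    let g : PowerSeries R := ∏ i, (1 - PowerSeries.C (R := R) (x i) * PowerSeries.X)
    let Cb : k → ℕ → k := fun a r =>
      ((r.factorial : k)⁻¹) * ∏ i ∈ Finset.range r, (a - (i : k))
    let F : PowerSeries R :=
      ∑ m ∈ Finset.range p, (MvPolynomial.C (Cb c m) : R) • (g - 1) ^ m
    PowerSeries.map φ g = 1 - PowerSeries.X ^ 2 ∧
      PowerSeries.coeff (R := k) p (PowerSeries.map φ (F * geom (x j)))
        = ∑ m ∈ Finset.range ((p - 1) / 2 + 1), (-1 : k) ^ m * Cb c m ∧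
      ∀ i : Fin n, i ≠ j → (i : ℕ) < n - 1 →
        PowerSeries.coeff (R := k) p (PowerSeries.map φ (F * geom (x i))) = 0 := by
  intro R x φ geom g Cb F
  set a : Fin n → k := fun i => if (i : ℕ) = n - 1 then -1 else if i = j then 1 else 0
  have ha : ∀ i, a i = if (i : ℕ) = n - 1 then -1 else if i = j then 1 else 0 := fun _ => rfl
  have haj : a j = 1 := by rw [ha, if_neg (by omega), if_pos rfl]
  have hφx : ∀ i, φ (x i) = a i := fun i => MvPolynomial.aeval_X _ i
  have hφgeom : ∀ i, map φ (geom (x i)) = mk fun l => a i ^ l := fun i => by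
    rw [map_mk_pow, hφx]
  have hφg : map φ g = 1 - X ^ 2 := by
    rw [map_prod_one_sub_C_mul_X]
    simp only [hφx]
    refine prod_one_sub_C_mul_X_eq_one_sub_X_sq a (l := ⟨n - 1, by omega⟩) (ne_of_lt hj) haj
      (if_pos rfl) fun i hij hil => ?_
    rw [ha, if_neg fun h => hil (Fin.ext h), if_neg hij]
  have hφC : ∀ b, φ (MvPolynomial.C b) = b := MvPolynomial.aeval_C _
  have hφF : map φ F = ∑ m ∈ range p, C ((-1) ^ m * Cb c m) * X ^ (2 * m) := by
    simp only [F, map_sum_smul_sub_one_pow hφg, hφC]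
  refine ⟨hφg, ?_, fun i hij hi => ?_⟩
  · obtain ⟨t, ht⟩ := id hodd
    rw [map_mul, hφF, hφgeom, haj]
    simp only [one_pow]
    rw [coeff_sum_C_mul_X_pow_two_mul_mul_mk_one _ (by omega), show (p - 1) / 2 = p / 2 by omega]
  · have hai : a i = 0 := by rw [ha, if_neg (by omega), if_neg hij]
    rw [map_mul, hφgeom, hai, mk_zero_pow, mul_one, hφF,
      coeff_sum_C_mul_X_pow_two_mul_of_odd _ _ hodd]

/-- Under the substitution `x_n = -1`, `x_j = 1`, `x_i = 0` for
`i ≠ j, n`, the polynomial `g(z) = ∏_i (1 - x_i z)` specializes to `1 - z²`;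
the coefficient of `z^p` in `F(z)/(1 - x_j z)` specializes to
`∑_{m=0}^{(p-1)/2} (-1)^m C(c,m)`; and for `i ≠ j, i < n`, the coefficient of
`z^p` in `F(z)/(1 - x_i z)` specializes to `0`. -/
theorem stmt14 (p n : ℕ) (hp : p.Prime) (hodd : Odd p)
    (k : Type*) [Field k] [CharP k p] (hpn : p ∣ n) (c : k)
    (j : Fin n) (hj : (j : ℕ) < n - 1) :
    let R := MvPolynomial (Fin n) k
    let x : Fin n → R := MvPolynomial.X
    let φ : R →+* k := (MvPolynomial.aeval (R := k) (fun i : Fin n =>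
      if (i : ℕ) = n - 1 then (-1 : k) else if i = j then 1 else 0)).toRingHom
    let geom : R → PowerSeries R := fun a => PowerSeries.mk fun l => a ^ l
    let g : PowerSeries R := ∏ i, (1 - PowerSeries.C (R := R) (x i) * PowerSeries.X)
    let Cb : k → ℕ → k := fun a r =>
      ((r.factorial : k)⁻¹) * ∏ i ∈ Finset.range r, (a - (i : k))
    let F : PowerSeries R :=
      ∑ m ∈ Finset.range p, (MvPolynomial.C (Cb c m) : R) • (g - 1) ^ m
    PowerSeries.map φ g = 1 - PowerSeries.X ^ 2 ∧
      PowerSeries.coeff (R := k) p (PowerSeries.map φ (F * geom (x j)))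
        = ∑ m ∈ Finset.range ((p - 1) / 2 + 1), (-1 : k) ^ m * Cb c m ∧
      ∀ i : Fin n, i ≠ j → (i : ℕ) < n - 1 →
        PowerSeries.coeff (R := k) p (PowerSeries.map φ (F * geom (x i))) = 0 :=
  stmt14_general p n hodd k c j hj
end

section
/- Let p be an odd prime, k an algebraically closed field of characteristic p with p | n, and c ∈ k with c ∉ {1, ..., (p-1)/2}. Then the elements f_1, ..., f_{n-1}, where f_i = [z^p](F(z)/(1 - x_i z)) with F(z) = ∑_{m=0}^{p-1} C(c,m)(g(z)-1)^m and g(z) = ∏_{j=1}^n (1 - x_j z), are linearly independent over k in A = k[x_1, ..., x_n]/(x_1 + ... + x_n). -/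
/-!
Evaluate at the point `x_j = 1`, `x_n = -1`, `x_i = 0` otherwise, which lies on the hyperplane
`x_1 + ⋯ + x_n = 0`. There `g(z) = 1 - z²`, so `F(z) = ∑ C(c,m) (-z²)^m` is even. Hence, `p` being
odd, the evaluation of `f_i = [z^p] F(z)/(1 - x_i z)` is `[z^p] F(z) = 0` for `i ≠ j`, while that of
`f_j` is `∑_{m ≤ M} (-1)^m C(c,m) = (-1)^M C(c-1,M)` with `M = (p-1)/2`, and this is nonzero
because `c ∉ {1, …, M}`. So these `n - 1` evaluations form a family dual to the `f_i` up to a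
nonzero scalar.
-/

open Finset
open scoped Nat

section binomCoeff

variable {K : Type*} [Field K]

/-- This is the junk value `0` as soon as `r! = 0` in `K`. -/
def binomCoeff (a : K) (r : ℕ) : K := (r ! : K)⁻¹ * ∏ i ∈ range r, (a - i)

theorem binomCoeff_succ {a : K} {m : ℕ} (h : ((m + 1)! : K) ≠ 0) :
    binomCoeff a (m + 1) = binomCoeff (a - 1) m + binomCoeff (a - 1) (m + 1) := by
  have hfac : ((m + 1)! : K) = (m + 1) * m ! := by push_cast [Nat.factorial_succ]; ring
  rw [hfac] at h
  have hm : (m ! : K) ≠ 0 := right_ne_zero_of_mul h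
  have hm1 : (m + 1 : K) ≠ 0 := left_ne_zero_of_mul h
  have hprod : ∏ i ∈ range (m + 1), (a - i) = a * ∏ i ∈ range m, (a - 1 - i) := by
    rw [prod_range_succ', mul_comm]
    simp only [Nat.cast_add, Nat.cast_one, Nat.cast_zero, sub_zero, sub_add_eq_sub_sub_swap]
  simp only [binomCoeff, hfac, hprod, prod_range_succ _ m]
  field_simp
  ring

theorem sum_range_neg_one_pow_mul_binomCoeff (a : K) {M : ℕ} (h : (M ! : K) ≠ 0) :
    ∑ m ∈ range (M + 1), (-1) ^ m * binomCoeff a m = (-1) ^ M * binomCoeff (a - 1) M := by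
  induction M with
  | zero => simp [binomCoeff]
  | succ M ih =>
    have hM : (M ! : K) ≠ 0 := by
      rw [Nat.factorial_succ, Nat.cast_mul] at h
      exact right_ne_zero_of_mul h
    rw [sum_range_succ, ih hM, binomCoeff_succ h]
    ring

theorem binomCoeff_ne_zero {a : K} {M : ℕ} (h : (M ! : K) ≠ 0) (ha : ∀ i < M, a ≠ i) :
    binomCoeff a M ≠ 0 :=
  mul_ne_zero (inv_ne_zero h) <|
    prod_ne_zero_iff.2 fun i hi => sub_ne_zero.2 <| ha i <| mem_range.1 hi

theorem Nat.cast_factorial_ne_zero_of_lt_char {p : ℕ} [CharP K p] (hp : p.Prime) {m : ℕ}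
    (hm : m < p) : (m ! : K) ≠ 0 := by
  rw [Ne, CharP.cast_eq_zero_iff K p, hp.dvd_factorial]
  omega

theorem sum_range_neg_one_pow_mul_binomCoeff_ne_zero {p : ℕ} [CharP K p] (hp : p.Prime)
    {a : K} {M : ℕ} (hM : M < p) (ha : ∀ j : ℕ, 1 ≤ j → j ≤ M → a ≠ j) :
    ∑ m ∈ range (M + 1), (-1) ^ m * binomCoeff a m ≠ 0 := by
  have hfac := Nat.cast_factorial_ne_zero_of_lt_char (K := K) hp hM
  rw [sum_range_neg_one_pow_mul_binomCoeff a hfac]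
  refine mul_ne_zero (pow_ne_zero _ (neg_ne_zero.2 one_ne_zero)) <|
    binomCoeff_ne_zero hfac fun i hi h => ha (i + 1) (by omega) (by omega) ?_
  push_cast
  linear_combination h

end binomCoeff

theorem linearIndependent_of_apply_eq_single {K M ι : Type*} [Field K] [AddCommGroup M]
    [Module K M] [DecidableEq ι] (v : ι → M) (ev : ι → M →ₗ[K] K) {α : K} (hα : α ≠ 0)
    (h : ∀ i j, ev j (v i) = (Pi.single i α : ι → K) j) : LinearIndependent K v := by
  refine LinearIndependent.of_comp (LinearMap.pi ev) ?_
  rw [show _ ∘ _ = fun i => Pi.single i α from funext fun i => funext (h i)]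
  exact Pi.linearIndependent_single_of_ne_zero fun _ => hα

namespace MvPolynomial

variable {R σ : Type*} [CommRing R] [Fintype σ]

noncomputable def evalQuotSumX (P : σ → R) (hP : ∑ i, P i = 0) :
    (MvPolynomial σ R ⧸ Ideal.span {(∑ i, X i : MvPolynomial σ R)}) →ₐ[R] R :=
  Ideal.Quotient.liftₐ _ (aeval P) fun a ha => by
    obtain ⟨q, rfl⟩ := Ideal.mem_span_singleton'.1 ha
    simp [hP]

theorem evalQuotSumX_mk_X (P : σ → R) (hP : ∑ i, P i = 0) (i : σ) :
    evalQuotSumX P hP (Ideal.Quotient.mk _ (X i)) = P i := by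
  simp [evalQuotSumX]

end MvPolynomial

namespace PowerSeries

variable {R : Type*} [CommRing R]

theorem coeff_sum_mul_geom (b : ℕ → R) (t : R) (r N : ℕ) :
    coeff N ((∑ m ∈ range r, C (b m) * (-X ^ 2) ^ m) * mk fun l => t ^ l) =
      ∑ m ∈ range r with 2 * m ≤ N, (-1) ^ m * b m * t ^ (N - 2 * m) := by
  rw [sum_mul, map_sum, sum_filter]
  refine sum_congr rfl fun m _ => ?_
  have hterm : C (b m) * (-X ^ 2) ^ m = C ((-1) ^ m * b m) * X ^ (2 * m) := by
    rw [neg_pow, ← pow_mul, map_mul, map_pow, map_neg, map_one]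
    ring
  rw [hterm, mul_assoc, coeff_C_mul, coeff_X_pow_mul', coeff_mk, mul_ite, mul_zero]

theorem map_prod_one_sub_C_mul_X_s15 {A ι : Type*} [CommRing A] [Fintype ι] [DecidableEq ι]
    (ψ : A →+* R) (x : ι → A) {j l : ι} (hjl : j ≠ l)
    (hx : ⇑ψ ∘ x = Pi.single j 1 - Pi.single l 1) :
    map ψ (∏ i, (1 - C (x i) * X)) = 1 - X ^ 2 := by
  have hx' (i : ι) : ψ (x i) = (Pi.single j 1 - Pi.single l 1 : ι → R) i := congrFun hx i
  simp only [map_prod, map_sub, map_one, map_mul, map_C, map_X, hx']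
  rw [prod_eq_mul j l hjl (fun i _ hi => by simp [hi.1, hi.2]) (by simp) (by simp)]
  simp [hjl, hjl.symm]
  ring

theorem eval_coeff_sum_mul_geom {k A ι : Type*} [CommRing k] [CommRing A] [Algebra k A]
    [Fintype ι] [DecidableEq ι] (ψ : A →ₐ[k] k) (x : ι → A) {j l : ι} (hjl : j ≠ l)
    (hx : ⇑ψ ∘ x = Pi.single j 1 - Pi.single l 1) (b : ℕ → k) (a : A) (r N : ℕ) :
    ψ (coeff N ((∑ m ∈ range r, algebraMap k A (b m) • (∏ i, (1 - C (x i) * X) - 1) ^ m) *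
        mk fun l => a ^ l)) =
      ∑ m ∈ range r with 2 * m ≤ N, (-1) ^ m * b m * ψ a ^ (N - 2 * m) := by
  have hgeom : map (ψ : A →+* k) (mk fun l => a ^ l) = mk fun l => ψ a ^ l := by
    ext; simp
  have hF : map (ψ : A →+* k)
      (∑ m ∈ range r, algebraMap k A (b m) • (∏ i, (1 - C (x i) * X) - 1) ^ m) =
        ∑ m ∈ range r, C (b m) * (-X ^ 2) ^ m := by
    simp only [map_sum, smul_eq_C_mul, map_mul, map_pow, map_sub, map_one,
      map_prod_one_sub_C_mul_X_s15 (ψ : A →+* k) x hjl hx, map_C]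
    simp
  change (ψ : A →+* k) _ = _
  rw [← coeff_map, map_mul, hgeom, hF, coeff_sum_mul_geom]

theorem eval_coeff_odd_sum_mul_geom {k A ι : Type*} [CommRing k] [CommRing A] [Algebra k A]
    [Fintype ι] [DecidableEq ι] (ψ : A →ₐ[k] k) (x : ι → A) {j l : ι} (hjl : j ≠ l)
    (hx : ⇑ψ ∘ x = Pi.single j 1 - Pi.single l 1) (b : ℕ → k) (a : A) (M : ℕ) :
    ψ (coeff (2 * M + 1)
        ((∑ m ∈ range (2 * M + 1), algebraMap k A (b m) • (∏ i, (1 - C (x i) * X) - 1) ^ m) *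
          mk fun l => a ^ l)) =
      ∑ m ∈ range (M + 1), (-1) ^ m * b m * ψ a ^ (2 * (M - m) + 1) := by
  have hrange : (range (2 * M + 1)).filter (fun m => 2 * m ≤ 2 * M + 1) = range (M + 1) := by
    ext m
    simp only [mem_filter, mem_range]
    omega
  rw [eval_coeff_sum_mul_geom ψ x hjl hx, hrange]
  refine sum_congr rfl fun m hm => ?_
  rw [show 2 * M + 1 - 2 * m = 2 * (M - m) + 1 by rw [mem_range] at hm; omega]

end PowerSeries

/-- For an odd prime `p`, an algebraically closed field `k` of
characteristic `p` with `p ∣ n`, and `c ∈ k` with `c ∉ {1, …, (p-1)/2}`, the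
elements `f_1, …, f_{n-1}`, where `f_i = [z^p](F(z)/(1 - x_i z))` with
`F(z) = ∑_{m=0}^{p-1} C(c,m)(g(z)-1)^m` and `g(z) = ∏_j (1 - x_j z)`, are
linearly independent over `k` in `A = k[x_1,…,x_n]/(x_1+⋯+x_n)`. -/
theorem stmt15 (p n : ℕ) (hp : p.Prime) (hodd : Odd p)
    (k : Type*) [Field k] [CharP k p] (c : k)
    (hc : ∀ j : ℕ, 1 ≤ j → j ≤ (p - 1) / 2 → c ≠ (j : k)) :
    let A := MvPolynomial (Fin n) k ⧸
      Ideal.span {(∑ i, MvPolynomial.X i : MvPolynomial (Fin n) k)}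
    let x : Fin n → A := fun i => Ideal.Quotient.mk _ (MvPolynomial.X i)
    let geom : A → PowerSeries A := fun a => PowerSeries.mk fun l => a ^ l
    let g : PowerSeries A := ∏ j, (1 - PowerSeries.C (R := A) (x j) * PowerSeries.X)
    let Cb : k → ℕ → k := fun a r =>
      ((r.factorial : k)⁻¹) * ∏ i ∈ Finset.range r, (a - (i : k))
    let F : PowerSeries A :=
      ∑ m ∈ Finset.range p, algebraMap k A (Cb c m) • (g - 1) ^ m
    let f : Fin n → A := fun i => PowerSeries.coeff (R := A) p (F * geom (x i))
    LinearIndependent k (fun i : Fin (n - 1) => f (Fin.castLE (by omega) i)) := by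
  intro A x geom g Cb F f
  obtain ⟨M, rfl⟩ := hodd
  have hα := sum_range_neg_one_pow_mul_binomCoeff_ne_zero hp (by omega : M < 2 * M + 1)
    fun j hj hjM => hc j hj (by omega)
  let last (j : Fin (n - 1)) : Fin n := ⟨n - 1, by have := j.2; omega⟩
  let P (j : Fin (n - 1)) : Fin n → k :=
    Pi.single (Fin.castLE (by omega) j) 1 - Pi.single (last j) 1
  let ev (j : Fin (n - 1)) : A →ₐ[k] k :=
    MvPolynomial.evalQuotSumX (P j) (by simp [P, sum_sub_distrib])
  refine linearIndependent_of_apply_eq_single _ (fun j => (ev j).toLinearMap) hα fun i j => ?_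
  have hjl : Fin.castLE (by omega) j ≠ last j := Fin.ne_of_val_ne (by simp [last]; omega)
  have hx : ⇑(ev j) ∘ x = P j := funext (MvPolynomial.evalQuotSumX_mk_X (P j) _)
  have hxi : ev j (x (Fin.castLE (by omega) i)) = if i = j then 1 else 0 := by
    have hil : Fin.castLE (by omega) i ≠ last j := Fin.ne_of_val_ne (by simp [last]; omega)
    rw [← Function.comp_apply (f := ev j), hx]
    simp [P, Pi.single_apply, hil, Fin.castLE_inj]
  change ev j (f (Fin.castLE (by omega) i)) = _
  rw [show ev j (f _) = _ from PowerSeries.eval_coeff_odd_sum_mul_geom (ev j) x hjl hx _ _ M, hxi]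
  by_cases hij : i = j
  · subst hij
    simp [Cb, binomCoeff]
  · simp [hij, Ne.symm hij]
end
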